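/- arXiv:2505.01554 — 3 statements merged into one kernel-verified Lean document; each statement's English description precedes it below -/
import Mathlib

section
/- Settle is idempotent: applying Settle twice to a specification Ψ consistent with a description D gives the same result as applying it once, i.e., Settle(Settle(Ψ,D), D) = Settle(Ψ,D). -/
/-! A fix consistent with `D` refines `settle Ψ D` exactly when it refines `Ψ`, because `settle`
only writes down values that all such fixes share. So both specifications force the same values
at every position, and a second pass has nothing new to fill in. -/

/-- Lengths of the maximal blocks of consecutive `true`s (1s), left to right. -/
def blocks (s : List Bool) : List ℕ :=
  ((s.splitOn false).map List.length).filter (· ≠ 0)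

/-- A fix (a 0/1 string) is consistent with a description `D` if its maximal
blocks of 1s have exactly the lengths listed in `D`, from left to right. -/
def FixConsistent (s : List Bool) (D : List ℕ) : Prop := blocks s = D

/-- `Refines Ψ' Ψ`: the specification `Ψ'` refines `Ψ` (at every position,
`Ψ` has `?` (= `none`) or the two symbols agree). -/
def Refines (Ψ' Ψ : List (Option Bool)) : Prop :=
  List.Forall₂ (fun a b => a = none ∨ a = b) Ψ Ψ'

/-- The fix `f` refines the specification `Ψ`. -/
def FixRefines (Ψ : List (Option Bool)) (f : List Bool) : Prop :=
  List.Forall₂ (fun a b => a = none ∨ a = some b) Ψ f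

/-- A specification is consistent with `D` if some fix refining it is. -/
def SpecConsistent (Ψ : List (Option Bool)) (D : List ℕ) : Prop :=
  ∃ f : List Bool, FixRefines Ψ f ∧ FixConsistent f D

open Classical in
/-- `settle Ψ D` replaces each `?` at position `i` of `Ψ` by the value `v`
whenever every fix refining `Ψ` and consistent with `D` has value `v` at
position `i`; all other positions are left unchanged. -/
noncomputable def settle (Ψ : List (Option Bool)) (D : List ℕ) : List (Option Bool) :=
  Ψ.mapIdx (fun i a =>
    match a with
    | some v => some v
    | none =>
      if h : ∃ v : Bool, ∀ f : List Bool,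
          FixRefines Ψ f → FixConsistent f D → f[i]? = some v
      then some h.choose else none)

def Forced (Ψ : List (Option Bool)) (D : List ℕ) (i : ℕ) (v : Bool) : Prop :=
  ∀ f : List Bool, FixRefines Ψ f → FixConsistent f D → f[i]? = some v

lemma length_settle (Ψ : List (Option Bool)) (D : List ℕ) :
    (settle Ψ D).length = Ψ.length := by
  simp [settle]

open Classical in
lemma getElem?_settle (Ψ : List (Option Bool)) (D : List ℕ) (i : ℕ) :
    (settle Ψ D)[i]? =
      Ψ[i]?.map (·.or (if h : ∃ v, Forced Ψ D i v then some h.choose else none)) := by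
  simp only [settle, List.getElem?_mapIdx]
  congr 1
  funext a
  cases a <;> rfl

section

variable {Ψ : List (Option Bool)} {D : List ℕ} {i : ℕ} {v : Bool} {f : List Bool}

lemma fixRefines_iff :
    FixRefines Ψ f ↔
      Ψ.length = f.length ∧ ∀ (i : ℕ) (v : Bool), Ψ[i]? = some (some v) → f[i]? = some v := by
  rw [FixRefines, List.forall₂_iff_get]
  refine and_congr_right fun hlen => ⟨fun h i v hi => ?_, fun h i hi hf => ?_⟩
  · obtain ⟨hi, hΨ⟩ := List.getElem?_eq_some_iff.1 hi
    have := h i hi (hlen ▸ hi)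
    simp_all
  · simp only [List.get_eq_getElem]
    cases hΨ : Ψ[i] with
    | none => exact .inl rfl
    | some v =>
      simpa [List.getElem?_eq_getElem hf, eq_comm] using
        h i v (List.getElem?_eq_some_iff.2 ⟨hi, hΨ⟩)

lemma getElem?_settle_of_some (h : Ψ[i]? = some (some v)) : (settle Ψ D)[i]? = some (some v) := by
  simp [getElem?_settle, h]

lemma getElem?_settle_eq_some_none :
    (settle Ψ D)[i]? = some none ↔ Ψ[i]? = some none ∧ ¬∃ v, Forced Ψ D i v := by
  rw [getElem?_settle]
  cases Ψ[i]? with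
  | none => simp
  | some a => cases a <;> split_ifs <;> simp_all

lemma forced_of_getElem?_eq_some (h : Ψ[i]? = some (some v)) : Forced Ψ D i v :=
  fun _ hf _ => (fixRefines_iff.1 hf).2 i v h

lemma forced_of_getElem?_settle_eq_some
    (h : (settle Ψ D)[i]? = some (some v)) : Forced Ψ D i v := by
  rw [getElem?_settle] at h
  rcases hΨ : Ψ[i]? with _ | _ | w
  · simp [hΨ] at h
  · rw [hΨ] at h
    split_ifs at h with hex
    · cases h
      exact hex.choose_spec
    · simp at h
  · rw [hΨ] at h
    simp only [Option.map_some, Option.some_or, Option.some.injEq] at h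
    exact forced_of_getElem?_eq_some (h ▸ hΨ)

lemma fixRefines_settle_iff (hc : FixConsistent f D) : FixRefines (settle Ψ D) f ↔ FixRefines Ψ f := by
  simp only [fixRefines_iff, length_settle]
  refine and_congr_right fun hlen => ⟨fun h i v hi => h i v (getElem?_settle_of_some hi),
    fun hf i v hi => ?_⟩
  exact forced_of_getElem?_settle_eq_some hi f (fixRefines_iff.2 ⟨hlen, hf⟩) hc

lemma forced_settle_iff :
    Forced (settle Ψ D) D i v ↔ Forced Ψ D i v :=
  forall_congr' fun _ => ⟨fun h hf hc => h ((fixRefines_settle_iff hc).2 hf) hc,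
    fun h hf hc => h ((fixRefines_settle_iff hc).1 hf) hc⟩

end

theorem settle_idem_general (Ψ : List (Option Bool)) (D : List ℕ) :
    settle (settle Ψ D) D = settle Ψ D := by
  refine List.ext_getElem? fun i => ?_
  rcases hS : (settle Ψ D)[i]? with _ | _ | v
  · rw [List.getElem?_eq_none_iff, length_settle, ← List.getElem?_eq_none_iff, hS]
  · obtain ⟨-, hfree⟩ := getElem?_settle_eq_some_none.1 hS
    exact getElem?_settle_eq_some_none.2 ⟨hS, by simpa only [forced_settle_iff] using hfree⟩
  · exact getElem?_settle_of_some hS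

/-- Idempotence of `Settle` on specifications consistent with `D`. -/
theorem settle_idem (Ψ : List (Option Bool)) (D : List ℕ)
    (h : SpecConsistent Ψ D) :
    settle (settle Ψ D) D = settle Ψ D :=
  settle_idem_general Ψ D
end

section
/- Correctness of the consistency recursion (concatenation lemma): a string s of length l over {0,1} matches the pattern a_1...a_k (where each 0 in the pattern may match one or more 0s and each 1 matches exactly one 1) if and only if there exist a split l = l_1 + l_2 with l_1, l_2 ≥ 1 and either (i) a split k = k_1 + k_2 such that the prefix of s of length l_1 matches a_1...a_{k_1} and the suffix of length l_2 matches a_{k_1+1}...a_k, or (ii) an index i with a_i = 0 such that the prefix matches a_1...a_i and the suffix matches a_i...a_k (sharing the 0 at position i), provided l ≥ 2. -/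
/-!
Splitting off the first letter of `s` already gives a decomposition: it matches the first letter
of the pattern on its own, unless it is one of several `0`s replacing a single pattern `0`, in
which case it shares that `0` with the rest. Conversely, matches concatenate, and in the shared
case the two blocks of `0`s merge into one.
-/

/-- `Matches s p`: the string `s` matches the pattern `p`, where each `false`
(0) of the pattern may be replaced by one or more `false`s and each `true`
(1) matches exactly one `true`. -/
inductive Matches : List Bool → List Bool → Prop
  | nil : Matches [] []
  | one {s p} : Matches s p → Matches (true :: s) (true :: p)
  | zero {s p} : Matches s p → Matches (false :: s) (false :: p)
  | pad {s p} : Matches s (false :: p) → Matches (false :: s) (false :: p)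

namespace Matches

theorem append {s₁ p₁ s₂ p₂ : List Bool} (h₁ : Matches s₁ p₁) (h₂ : Matches s₂ p₂) :
    Matches (s₁ ++ s₂) (p₁ ++ p₂) := by
  induction h₁ with
  | nil => exact h₂
  | one _ ih => exact ih.one
  | zero _ ih => exact ih.zero
  | pad _ ih => exact ih.pad

theorem eq_nil_of_nil {s : List Bool} (h : Matches s []) : s = [] := by
  cases h
  rfl

theorem append_of_shared_zero {s₁ s₂ a₁ a₂ : List Bool} (h₁ : Matches s₁ (a₁ ++ [false]))
    (h₂ : Matches s₂ (false :: a₂)) : Matches (s₁ ++ s₂) (a₁ ++ false :: a₂) := by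
  induction s₁ generalizing a₁ with
  | nil => cases a₁ <;> cases h₁
  | cons c s ih =>
    rcases a₁ with _ | ⟨b, t⟩
    · cases h₁ with
      | zero h => rw [h.eq_nil_of_nil]; exact h₂.pad
      | pad h => exact (ih (a₁ := []) h).pad
    · cases h₁ with
      | one h => exact (ih h).one
      | zero h => exact (ih h).zero
      | pad h => exact (ih (a₁ := false :: t) h).pad

end Matches

/-- Concatenation lemma for the consistency recursion: for `|s| ≥ 2`, `s`
matches the pattern `a` iff `s` splits into two nonempty parts such that
either (i) the pattern splits accordingly, or (ii) the two parts share a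
single `0` of the pattern. -/
theorem matches_split (s a : List Bool) (hl : 2 ≤ s.length) :
    Matches s a ↔
      ∃ s₁ s₂ : List Bool, s = s₁ ++ s₂ ∧ s₁ ≠ [] ∧ s₂ ≠ [] ∧
        ((∃ a₁ a₂ : List Bool, a = a₁ ++ a₂ ∧ Matches s₁ a₁ ∧ Matches s₂ a₂) ∨
         (∃ a₁ a₂ : List Bool, a = a₁ ++ false :: a₂ ∧
            Matches s₁ (a₁ ++ [false]) ∧ Matches s₂ (false :: a₂))) := by
  constructor
  · intro h
    obtain ⟨c, t, rfl⟩ : ∃ c t, s = c :: t :=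
      List.exists_cons_of_ne_nil (by rintro rfl; simp at hl)
    have ht : t ≠ [] := by rintro rfl; simp at hl
    refine ⟨[c], t, rfl, List.cons_ne_nil _ _, ht, ?_⟩
    cases h with
    | one h => exact .inl ⟨[true], _, rfl, .one .nil, h⟩
    | zero h => exact .inl ⟨[false], _, rfl, .zero .nil, h⟩
    | pad h => exact .inr ⟨[], _, rfl, .zero .nil, h⟩
  · rintro ⟨s₁, s₂, rfl, -, -, ⟨a₁, a₂, rfl, h₁, h₂⟩ | ⟨a₁, a₂, rfl, h₁, h₂⟩⟩
    · exact h₁.append h₂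
    · exact h₁.append_of_shared_zero h₂
end

section
/- Uniqueness of blocker matching: let Ψ be a specification in which the filled (1) positions form m disjoint runs each of length exactly b, separated by gaps of ?-positions each of length strictly less than b, and let D be a description whose clues of size ≥ b are exactly m clues of size exactly b. Then in every fix refining Ψ consistent with D, the i-th size-b clue of D is realized exactly on the i-th run of pre-filled 1s. -/
/-- Auxiliary function computing maximal runs of `true` with their start
positions, beginning at position `i`. -/
def runsAux : ℕ → List Bool → List (ℕ × ℕ)
  | _, [] => []
  | i, false :: s => runsAux (i+1) s
  | i, true :: s =>
    match runsAux (i+1) s with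
    | (j, len) :: rest =>
        if j = i+1 then (i, len+1) :: rest else (i, 1) :: (j, len) :: rest
    | [] => [(i, 1)]

/-- The maximal runs of `true`s of a 0/1 string, as (start, length) pairs,
from left to right. -/
def runs (s : List Bool) : List (ℕ × ℕ) := runsAux 0 s

/-!
A block of `1`s of length `≥ b` in a fix refining `Ψ` cannot lie entirely in `?`-positions,
since every gap is shorter than `b`; so it contains a pre-filled `1`, hence meets a pre-filled
run. A pre-filled run is flanked by `0`s, so it is a maximal block of the fix, and two maximal
blocks that meet coincide. Conversely every pre-filled run is a block of length `b` of the fix.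
Both sides list runs ordered by their starting positions, so having the same members makes
them equal.
-/

lemma runsAux_succ (i : ℕ) (s : List Bool) :
    runsAux (i + 1) s = (runsAux i s).map fun p => (p.1 + 1, p.2) := by
  induction s generalizing i with
  | nil => rfl
  | cons c s ih =>
    cases c with
    | false => simp [runsAux, ih]
    | true =>
      simp only [runsAux, ih (i + 1)]
      rcases runsAux (i + 1) s with _ | ⟨⟨j, len⟩, rest⟩
      · rfl
      · by_cases hj : j = i + 1 <;> simp [hj]

lemma runs_cons_false (s : List Bool) :
    runs (false :: s) = (runs s).map fun p => (p.1 + 1, p.2) := by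
  simp [runs, runsAux, runsAux_succ]

lemma runs_cons_true_of_runs_eq_cons {s : List Bool} {len : ℕ} {rest : List (ℕ × ℕ)}
    (h : runs s = (0, len) :: rest) :
    runs (true :: s) = (0, len + 1) :: rest.map fun p => (p.1 + 1, p.2) := by
  simp only [runs] at h ⊢
  simp [runsAux, runsAux_succ 0, h]

lemma runs_cons_true_of_forall_not_mem {s : List Bool} (h : ∀ len, (0, len) ∉ runs s) :
    runs (true :: s) = (0, 1) :: (runs s).map fun p => (p.1 + 1, p.2) := by
  simp only [runs] at h ⊢
  rcases hs : runsAux 0 s with _ | ⟨⟨j, len⟩, rest⟩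
  · simp [runsAux, runsAux_succ 0, hs]
  · have hj : j ≠ 0 := by rintro rfl; exact h len (by simp [hs])
    simp [runsAux, runsAux_succ 0, hs, hj]

lemma pairwise_runs (s : List Bool) : (runs s).Pairwise fun p q => p.1 < q.1 := by
  induction s with
  | nil => simp [runs, runsAux]
  | cons c s ih =>
    have hshift : ((runs s).map fun p => (p.1 + 1, p.2)).Pairwise fun p q => p.1 < q.1 :=
      List.pairwise_map.2 (ih.imp Nat.succ_lt_succ)
    cases c with
    | false => rwa [runs_cons_false]
    | true =>
      rcases hs : runs s with _ | ⟨⟨j, len⟩, rest⟩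
      · rw [runs_cons_true_of_forall_not_mem (s := s) (by simp [hs]), hs]
        simp
      · rw [hs] at ih hshift
        by_cases hj : j = 0
        · subst hj
          rw [runs_cons_true_of_runs_eq_cons hs]
          simp only [List.map_cons, List.pairwise_cons] at hshift ⊢
          refine ⟨fun p hp => ?_, hshift.2⟩
          obtain ⟨q, -, rfl⟩ := List.mem_map.1 hp
          exact q.1.succ_pos
        · have h0 : ∀ len', (0, len') ∉ runs s := by
            intro len' hmem
            rw [hs, List.mem_cons] at hmem
            rcases hmem with he | hmem
            · exact hj (Prod.mk.inj he).1.symm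
            · exact Nat.not_lt_zero _ ((List.pairwise_cons.1 ih).1 _ hmem)
          rw [runs_cons_true_of_forall_not_mem h0, hs]
          refine List.pairwise_cons.2 ⟨fun p hp => ?_, hshift⟩
          obtain ⟨q, -, rfl⟩ := List.mem_map.1 hp
          exact q.1.succ_pos

lemma runs_eq_cons_of_mem {s : List Bool} {len : ℕ} (h : (0, len) ∈ runs s) :
    ∃ rest, runs s = (0, len) :: rest ∧ ∀ p ∈ rest, 0 < p.1 := by
  have hs := pairwise_runs s
  rcases hr : runs s with _ | ⟨q, rest⟩
  · simp [hr] at h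
  · rw [hr, List.pairwise_cons] at hs
    rw [hr, List.mem_cons] at h
    rcases h with rfl | h
    · exact ⟨rest, rfl, hs.1⟩
    · exact absurd (hs.1 _ h) (Nat.not_lt_zero _)

lemma runs_cons_true (s : List Bool) :
    (∃ len rest, runs s = (0, len) :: rest ∧ (∀ p ∈ rest, 0 < p.1) ∧
      runs (true :: s) = (0, len + 1) :: rest.map fun p => (p.1 + 1, p.2)) ∨
    ((∀ len, (0, len) ∉ runs s) ∧
      runs (true :: s) = (0, 1) :: (runs s).map fun p => (p.1 + 1, p.2)) := by
  by_cases h : ∃ len, (0, len) ∈ runs s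
  · obtain ⟨len, hlen⟩ := h
    obtain ⟨rest, hs, hrest⟩ := runs_eq_cons_of_mem hlen
    exact Or.inl ⟨len, rest, hs, hrest, runs_cons_true_of_runs_eq_cons hs⟩
  · push Not at h
    exact Or.inr ⟨h, runs_cons_true_of_forall_not_mem h⟩

lemma exists_mem_runs_of_getElem?_eq_true {s : List Bool} {j : ℕ} (h : s[j]? = some true) :
    ∃ p ∈ runs s, p.1 ≤ j ∧ j < p.1 + p.2 := by
  induction s generalizing j with
  | nil => simp at h
  | cons c s ih =>
    cases j with
    | zero =>
      obtain rfl : c = true := by simpa using h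
      rcases runs_cons_true s with ⟨len, rest, -, -, ht⟩ | ⟨-, ht⟩ <;>
        exact ⟨_, ht ▸ List.mem_cons_self, by simp⟩
    | succ j =>
      obtain ⟨p, hp, hpj, hjp⟩ := ih (by simpa using h)
      have hshift : (p.1 + 1, p.2) ∈ (runs s).map fun p => (p.1 + 1, p.2) :=
        List.mem_map_of_mem hp
      cases c with
      | false => exact ⟨_, runs_cons_false s ▸ hshift, by simp; omega⟩
      | true =>
        rcases runs_cons_true s with ⟨len, rest, hs, -, ht⟩ | ⟨-, ht⟩ <;> rw [ht]
        · rw [hs, List.mem_cons] at hp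
          rcases hp with rfl | hp
          · exact ⟨_, List.mem_cons_self, by simp at hjp ⊢; omega⟩
          · exact ⟨_, List.mem_cons_of_mem _ (List.mem_map_of_mem hp), by simp; omega⟩
        · exact ⟨_, List.mem_cons_of_mem _ hshift, by simp; omega⟩

def IsRun (s : List Bool) (j l : ℕ) : Prop :=
  0 < l ∧ (∀ k < l, s[j + k]? = some true) ∧ (j = 0 ∨ s[j - 1]? = some false) ∧
    s[j + l]? ≠ some true

lemma isRun_cons_succ_iff {c : Bool} {s : List Bool} {j l : ℕ} (hc : j = 0 → c = false) :
    IsRun (c :: s) (j + 1) l ↔ IsRun s j l := by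
  have hget (k : ℕ) : (c :: s)[j + 1 + k]? = s[j + k]? := by
    rw [Nat.add_right_comm, List.getElem?_cons_succ]
  have hflank : (c :: s)[j]? = some false ↔ j = 0 ∨ s[j - 1]? = some false := by
    cases j with
    | zero => simp [hc rfl]
    | succ j => simp
  simp only [IsRun, hget, Nat.add_sub_cancel, Nat.add_one_ne_zero, false_or, hflank]

lemma isRun_cons_true_zero {s : List Bool} {l : ℕ} (h : IsRun s 0 l) :
    IsRun (true :: s) 0 (l + 1) := by
  obtain ⟨-, htrue, -, hend⟩ := h
  refine ⟨l.succ_pos, fun k hk => ?_, Or.inl rfl, by simpa using hend⟩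
  cases k with
  | zero => rfl
  | succ k => simpa using htrue k (by omega)

lemma isRun_cons_true_zero_one {s : List Bool} (h : s[0]? ≠ some true) :
    IsRun (true :: s) 0 1 := by
  refine ⟨Nat.one_pos, fun k hk => ?_, Or.inl rfl, by simpa using h⟩
  obtain rfl : k = 0 := by omega
  rfl

lemma isRun_of_mem_runs {s : List Bool} {j l : ℕ} (h : (j, l) ∈ runs s) : IsRun s j l := by
  induction s generalizing j l with
  | nil => simp [runs, runsAux] at h
  | cons c s ih =>
    cases c with
    | false =>
      rw [runs_cons_false] at h
      obtain ⟨⟨a, b⟩, hab, he⟩ := List.mem_map.1 h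
      obtain ⟨rfl, rfl⟩ := Prod.mk.inj he
      exact (isRun_cons_succ_iff fun _ => rfl).2 (ih hab)
    | true =>
      rcases runs_cons_true s with ⟨len, rest, hs, hrest, ht⟩ | ⟨h0, ht⟩ <;>
        rw [ht, List.mem_cons] at h
      · rcases h with he | h
        · obtain ⟨rfl, rfl⟩ := Prod.mk.inj he
          exact isRun_cons_true_zero (ih (hs ▸ List.mem_cons_self))
        · obtain ⟨⟨a, b⟩, hab, he⟩ := List.mem_map.1 h
          obtain ⟨rfl, rfl⟩ := Prod.mk.inj he
          exact (isRun_cons_succ_iff fun ha => absurd ha (hrest _ hab).ne').2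
            (ih (hs ▸ List.mem_cons_of_mem _ hab))
      · rcases h with he | h
        · obtain ⟨rfl, rfl⟩ := Prod.mk.inj he
          refine isRun_cons_true_zero_one fun h1 => ?_
          obtain ⟨⟨a, b⟩, hp, ha, -⟩ := exists_mem_runs_of_getElem?_eq_true h1
          obtain rfl : a = 0 := Nat.le_zero.1 ha
          exact h0 b hp
        · obtain ⟨⟨a, b⟩, hab, he⟩ := List.mem_map.1 h
          obtain ⟨rfl, rfl⟩ := Prod.mk.inj he
          exact (isRun_cons_succ_iff fun ha => absurd (ha ▸ hab) (h0 b)).2 (ih hab)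

section IsRun

variable {s : List Bool} {j j₁ j₂ k l l₁ l₂ : ℕ}

lemma IsRun.start_le (h₁ : IsRun s j₁ l₁) (h₂ : IsRun s j₂ l₂) (hk₂ : j₂ ≤ k)
    (hk₁ : k < j₁ + l₁) : j₂ ≤ j₁ := by
  by_contra! hlt
  have hprev : s[j₂ - 1]? = some true := by
    simpa [show j₁ + (j₂ - 1 - j₁) = j₂ - 1 by omega] using h₁.2.1 (j₂ - 1 - j₁) (by omega)
  rcases h₂.2.2.1 with h | h
  · omega
  · simp [h] at hprev

lemma IsRun.length_le (h₁ : IsRun s j l₁) (h₂ : IsRun s j l₂) : l₂ ≤ l₁ := by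
  by_contra! hlt
  exact h₁.2.2.2 (h₂.2.1 l₁ hlt)

lemma IsRun.eq_of_mem (h₁ : IsRun s j₁ l₁) (h₂ : IsRun s j₂ l₂)
    (hk₁ : j₁ ≤ k ∧ k < j₁ + l₁) (hk₂ : j₂ ≤ k ∧ k < j₂ + l₂) : j₁ = j₂ ∧ l₁ = l₂ := by
  obtain rfl : j₁ = j₂ := le_antisymm (h₂.start_le h₁ hk₁.1 hk₂.2) (h₁.start_le h₂ hk₂.1 hk₁.2)
  exact ⟨rfl, le_antisymm (h₂.length_le h₁) (h₁.length_le h₂)⟩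

end IsRun

lemma mem_runs_iff {s : List Bool} {j l : ℕ} : (j, l) ∈ runs s ↔ IsRun s j l := by
  refine ⟨isRun_of_mem_runs, fun h => ?_⟩
  have hj : j ≤ j ∧ j < j + l := ⟨le_rfl, by have := h.1; omega⟩
  obtain ⟨p, hp, hpj⟩ := exists_mem_runs_of_getElem?_eq_true (by simpa using h.2.1 0 h.1)
  obtain ⟨rfl, rfl⟩ := h.eq_of_mem (isRun_of_mem_runs hp) hj hpj
  exact hp

lemma List.Forall₂.rel_of_getElem? {α β : Type*} {R : α → β → Prop} {l₁ : List α}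
    {l₂ : List β} (h : List.Forall₂ R l₁ l₂) {i : ℕ} {a : α} {b : β}
    (ha : l₁[i]? = some a) (hb : l₂[i]? = some b) : R a b := by
  induction h generalizing i with
  | nil => simp at ha
  | cons hab _ ih =>
    cases i with
    | zero => simp only [List.getElem?_cons_zero, Option.some.injEq] at ha hb; exact ha ▸ hb ▸ hab
    | succ i => exact ih (by simpa using ha) (by simpa using hb)

section FixRefines

variable {Ψ : List (Option Bool)} {f : List Bool} {i : ℕ} {x : Bool}

lemma FixRefines.getElem?_eq (h : FixRefines Ψ f) (hx : Ψ[i]? = some (some x)) :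
    f[i]? = some x := by
  have hi : i < f.length := h.length_eq ▸ (List.getElem?_eq_some_iff.1 hx).1
  have hrel := h.rel_of_getElem? hx (List.getElem?_eq_getElem hi)
  simp only [reduceCtorEq, Option.some.injEq, false_or] at hrel
  rw [List.getElem?_eq_getElem hi, hrel]

lemma FixRefines.getElem?_spec (h : FixRefines Ψ f) (hx : f[i]? = some x) :
    Ψ[i]? = some none ∨ Ψ[i]? = some (some x) := by
  have hi : i < Ψ.length := h.length_eq ▸ (List.getElem?_eq_some_iff.1 hx).1
  rw [List.getElem?_eq_getElem hi]
  simpa using h.rel_of_getElem? (List.getElem?_eq_getElem hi) hx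

end FixRefines

lemma getElem?_map_eq_some_true_iff {Ψ : List (Option Bool)} {i : ℕ} :
    (Ψ.map fun a => decide (a = some true))[i]? = some true ↔ Ψ[i]? = some (some true) := by
  rw [List.getElem?_map]
  rcases Ψ[i]? with _ | _ | _ <;> simp

section FixRefines

variable {Ψ : List (Option Bool)} {f : List Bool} {j l : ℕ}

lemma FixRefines.isRun_of_mem_runs_filled (h : FixRefines Ψ f)
    (hr : (j, l) ∈ runs (Ψ.map fun a => a = some true))
    (hflank : (j = 0 ∨ Ψ[j - 1]? = some (some false)) ∧
      (j + l = Ψ.length ∨ Ψ[j + l]? = some (some false))) : IsRun f j l := by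
  obtain ⟨hl, htrue, -, -⟩ := mem_runs_iff.1 hr
  refine ⟨hl, fun k hk => h.getElem?_eq (getElem?_map_eq_some_true_iff.1 (htrue k hk)),
    hflank.1.imp_right h.getElem?_eq, ?_⟩
  rcases hflank.2 with hend | hend
  · simp [← h.length_eq, hend]
  · simp [h.getElem?_eq hend]

lemma FixRefines.exists_filled_or_unknown_of_isRun (h : FixRefines Ψ f) (hr : IsRun f j l) :
    (∃ k, j ≤ k ∧ k < j + l ∧ Ψ[k]? = some (some true)) ∨
      (j + l ≤ Ψ.length ∧ ∀ k, j ≤ k → k < j + l → Ψ[k]? = some none) := by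
  have htrue (k : ℕ) (hjk : j ≤ k) (hkl : k < j + l) : f[k]? = some true := by
    simpa [Nat.add_sub_cancel' hjk] using hr.2.1 (k - j) (by omega)
  by_cases hfilled : ∃ k, j ≤ k ∧ k < j + l ∧ Ψ[k]? = some (some true)
  · exact Or.inl hfilled
  push Not at hfilled
  refine Or.inr ⟨?_, fun k hjk hkl => ?_⟩
  · have hlast := htrue (j + l - 1) (by have := hr.1; omega) (by have := hr.1; omega)
    have := (List.getElem?_eq_some_iff.1 hlast).1
    rw [← h.length_eq] at this
    omega
  · exact (h.getElem?_spec (htrue k hjk hkl)).resolve_right (hfilled k hjk hkl)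

end FixRefines

theorem blocker_matching_unique_general (Ψ : List (Option Bool)) (b : ℕ)
    (R : List (ℕ × ℕ)) (hR : R = runs (Ψ.map fun a => a = some true))
    (hlen : ∀ r ∈ R, r.2 = b)
    (hflank : ∀ r ∈ R,
      (r.1 = 0 ∨ Ψ[r.1 - 1]? = some (some false)) ∧
      (r.1 + r.2 = Ψ.length ∨ Ψ[r.1 + r.2]? = some (some false)))
    (hgaps : ∀ i len : ℕ, i + len ≤ Ψ.length →
      (∀ j : ℕ, i ≤ j → j < i + len → Ψ[j]? = some none) → len < b)
    (f : List Bool) (href : FixRefines Ψ f) :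
    (runs f).filter (fun r => b ≤ r.2) = R := by
  subst hR
  have hfilled {j l : ℕ} (hr : (j, l) ∈ runs (Ψ.map fun a => a = some true)) : IsRun f j l :=
    href.isRun_of_mem_runs_filled hr (hflank _ hr)
  have : Std.Irrefl fun p q : ℕ × ℕ => p.1 < q.1 := ⟨fun p => lt_irrefl p.1⟩
  refine ((pairwise_runs f).filter _).eq_of_mem_iff (pairwise_runs _) fun ⟨j, l⟩ => ?_
  simp only [List.mem_filter, decide_eq_true_eq]
  constructor
  · rintro ⟨hr, hbl⟩
    rcases href.exists_filled_or_unknown_of_isRun (mem_runs_iff.1 hr) with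
      ⟨k, hjk, hkl, hk⟩ | ⟨hle, hunknown⟩
    · obtain ⟨p, hp, hpk⟩ :=
        exists_mem_runs_of_getElem?_eq_true (getElem?_map_eq_some_true_iff.2 hk)
      obtain ⟨rfl, rfl⟩ := (mem_runs_iff.1 hr).eq_of_mem (hfilled hp) ⟨hjk, hkl⟩ hpk
      exact hp
    · exact absurd (hgaps j l hle hunknown) (not_lt.2 hbl)
  · intro hr
    exact ⟨mem_runs_iff.2 (hfilled hr), (hlen _ hr).ge⟩

/-- Uniqueness of blocker matching: suppose the pre-filled (`1`) positions of
the specification `Ψ` form `m` runs, each of length exactly `b`, each flanked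
by `0`s (or the ends of the string), all other unsettled positions form gaps
of length `< b`, and the clues of `D` of size `≥ b` are exactly `m` clues of
size exactly `b`. Then in every fix refining `Ψ` and consistent with `D`, the
blocks of size `≥ b` (i.e. the realizations of the `m` size-`b` clues) are
exactly the `m` pre-filled runs, in order. -/
theorem blocker_matching_unique (Ψ : List (Option Bool)) (b m : ℕ)
    (hb : 0 < b) (D : List ℕ)
    (R : List (ℕ × ℕ)) (hR : R = runs (Ψ.map fun a => a = some true))
    (hm : R.length = m) (hlen : ∀ r ∈ R, r.2 = b)
    (hflank : ∀ r ∈ R,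
      (r.1 = 0 ∨ Ψ[r.1 - 1]? = some (some false)) ∧
      (r.1 + r.2 = Ψ.length ∨ Ψ[r.1 + r.2]? = some (some false)))
    (hgaps : ∀ i len : ℕ, i + len ≤ Ψ.length →
      (∀ j : ℕ, i ≤ j → j < i + len → Ψ[j]? = some none) → len < b)
    (hD : D.filter (fun d => b ≤ d) = List.replicate m b)
    (f : List Bool) (href : FixRefines Ψ f) (hcon : FixConsistent f D) :
    (runs f).filter (fun r => b ≤ r.2) = R :=
  blocker_matching_unique_general Ψ b R hR hlen hflank hgaps f href
end
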